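/- Suppose t ↦ X(t) is a solution of the system on the half-open interval [t0, β) with β < +∞. Then the points stay uniformly separated: there exists L > 0 such that for all t ∈ [t0, β) and all pairs r ≠ s, ‖x_r(t) − x_s(t)‖ ≥ L. -/

import Mathlib

/-- The force acting on the `i`-th point of a configuration `X` of `m` points of `ℝ^m`,
for the adjacency matrix `h`:  `F_i(X) = ∑_{k ≠ i} (x_i − x_k)·(1/‖x_i − x_k‖² − h_{ik})`. -/
noncomputable def force (m : ℕ) (h : Matrix (Fin m) (Fin m) ℝ)
    (X : Fin m → EuclideanSpace ℝ (Fin m)) (i : Fin m) : EuclideanSpace ℝ (Fin m) :=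
  ∑ k ∈ Finset.univ.filter (fun k => k ≠ i), (1 / ‖X i - X k‖ ^ 2 - h i k) • (X i - X k)

/-- `X : ℝ → (ℝ^m)^m` is a solution of the system `x_i″ = F_i(X)` on the set `S ⊆ ℝ`:
its points are pairwise distinct at every `t ∈ S`, it is differentiable at every `t ∈ S`,
and its velocity `deriv` has derivative `F_i(X(t))` at every `t ∈ S`. -/
def IsSolution (m : ℕ) (h : Matrix (Fin m) (Fin m) ℝ) (S : Set ℝ)
    (X : ℝ → Fin m → EuclideanSpace ℝ (Fin m)) : Prop :=
  (∀ t ∈ S, ∀ i k : Fin m, i ≠ k → X t i ≠ X t k) ∧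
  (∀ i : Fin m, ∀ t ∈ S, DifferentiableAt ℝ (fun s => X s i) t) ∧
  (∀ i : Fin m, ∀ t ∈ S, HasDerivAt (deriv (fun s => X s i)) (force m h (X t) i) t)

/-- Kinetic energy of a tuple of velocities: `E_k(Y) = (1/2) ∑_r ‖y_r‖²`. -/
noncomputable def kineticEnergy (m : ℕ) (Y : Fin m → EuclideanSpace ℝ (Fin m)) : ℝ :=
  (1 / 2) * ∑ r, ‖Y r‖ ^ 2

/-- Potential energy of a configuration:
`E_p(X) = −(1/2) ∑_{r<s} (log ‖x_r − x_s‖² − h_{rs}‖x_r − x_s‖²)`. -/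
noncomputable def potentialEnergy (m : ℕ) (h : Matrix (Fin m) (Fin m) ℝ)
    (X : Fin m → EuclideanSpace ℝ (Fin m)) : ℝ :=
  -(1 / 2) * ∑ p ∈ Finset.univ.filter (fun p : Fin m × Fin m => p.1 < p.2),
      (Real.log (‖X p.1 - X p.2‖ ^ 2) - h p.1 p.2 * ‖X p.1 - X p.2‖ ^ 2)

/-! The energy `E = E_k + E_p` is conserved along a solution. Since `log y ≤ y` and `h ≥ 0`, the
potential energy is at least `-J / 4`, where `J = ∑_{i,k} ‖x_i - x_k‖²`; hence `E_k ≤ E + J / 4`,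
and `J' ≤ (2m + 1) J + 8m E`. By Grönwall, `J` stays bounded on the bounded interval `[t₀, β)`,
which bounds every `log ‖x_i - x_k‖²` from above. As `E_p ≤ E`, no single `-log ‖x_r - x_s‖²`
can then become large. -/

open Finset
open scoped RealInnerProductSpace

lemma two_mul_sum_filter_lt_eq_sum_sum {ι : Type*} [Fintype ι] [LinearOrder ι] {f : ι → ι → ℝ}
    (hf : ∀ i k, f i k = f k i) (hf₀ : ∀ i, f i i = 0) :
    2 * ∑ p ∈ univ.filter (fun p : ι × ι => p.1 < p.2), f p.1 p.2 = ∑ i, ∑ k, f i k := by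
  have hsplit : ∀ i k, f i k = (if i < k then f i k else 0) + (if k < i then f k i else 0) := by
    intro i k
    rcases lt_trichotomy i k with hik | rfl | hki
    · simp [hik, hik.not_gt]
    · simp [hf₀]
    · simp [hki, hki.not_gt, hf k i]
  calc 2 * ∑ p ∈ univ.filter (fun p : ι × ι => p.1 < p.2), f p.1 p.2
      = ∑ i, ∑ k, (if i < k then f i k else 0) + ∑ k, ∑ i, (if i < k then f i k else 0) := by
        rw [sum_filter, Fintype.sum_prod_type,
          sum_comm (f := fun i k => if i < k then f i k else 0)]
        ring
    _ = ∑ i, ∑ k, f i k := by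
        rw [← sum_add_distrib]
        refine sum_congr rfl fun i _ => ?_
        rw [← sum_add_distrib]
        exact sum_congr rfl fun k _ => (hsplit i k).symm

lemma bddAbove_image_Ico_of_hasDerivAt_le {f f' : ℝ → ℝ} {a b K ε : ℝ} (hK : 0 ≤ K)
    (hf : ∀ x ∈ Set.Ico a b, HasDerivAt f (f' x) x)
    (bound : ∀ x ∈ Set.Ico a b, f' x ≤ K * f x + ε) :
    BddAbove (f '' Set.Ico a b) := by
  refine ⟨gronwallBound (max (f a) 0) K (max ε 0) (b - a), ?_⟩
  rintro _ ⟨x, hx, rfl⟩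
  have hsub : Set.Icc a x ⊆ Set.Ico a b := Set.Icc_subset_Ico_right hx.2
  have hsub' : Set.Ico a x ⊆ Set.Ico a b := Set.Ico_subset_Ico_right hx.2.le
  calc f x ≤ gronwallBound (max (f a) 0) K (max ε 0) (x - a) :=
        le_gronwallBound_of_liminf_deriv_right_le
          (fun y hy => (hf y (hsub hy)).continuousAt.continuousWithinAt)
          (fun y hy _ hr => (hf y (hsub' hy)).hasDerivWithinAt.liminf_right_slope_le hr)
          (le_max_left _ _)
          (fun y hy => (bound y (hsub' hy)).trans (by gcongr; exact le_max_left _ _))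
          x ⟨hx.1, le_rfl⟩
    _ ≤ _ := gronwallBound_mono (le_max_right _ _) (le_max_right _ _) hK (by linarith [hx.2])

section Configurations

variable {ι E : Type*} [Fintype ι]

noncomputable def sumSqDist [SeminormedAddCommGroup E] (x : ι → E) : ℝ :=
  ∑ i, ∑ k, ‖x i - x k‖ ^ 2

lemma sq_norm_sub_le_sumSqDist [SeminormedAddCommGroup E] (x : ι → E) (i k : ι) :
    ‖x i - x k‖ ^ 2 ≤ sumSqDist x :=
  (single_le_sum (f := fun k => ‖x i - x k‖ ^ 2) (fun _ _ => by positivity) (mem_univ k)).trans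
    (single_le_sum (f := fun i => ∑ k, ‖x i - x k‖ ^ 2) (fun _ _ => by positivity) (mem_univ i))

variable [NormedAddCommGroup E] [InnerProductSpace ℝ E]

lemma sum_sum_two_mul_inner_sub_le (x v : ι → E) :
    ∑ i, ∑ k, 2 * ⟪x i - x k, v i - v k⟫ ≤
      sumSqDist x + 4 * Fintype.card ι * ∑ i, ‖v i‖ ^ 2 := by
  have hterm : ∀ i k, 2 * ⟪x i - x k, v i - v k⟫ ≤
      ‖x i - x k‖ ^ 2 + (2 * ‖v i‖ ^ 2 + 2 * ‖v k‖ ^ 2) := by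
    intro i k
    have := norm_sub_le (v i) (v k)
    nlinarith [real_inner_le_norm (x i - x k) (v i - v k),
      two_mul_le_add_sq ‖x i - x k‖ ‖v i - v k‖, norm_nonneg (v i - v k),
      sq_nonneg (‖v i‖ - ‖v k‖)]
  calc _ ≤ ∑ i, ∑ k, (‖x i - x k‖ ^ 2 + (2 * ‖v i‖ ^ 2 + 2 * ‖v k‖ ^ 2)) :=
        sum_le_sum fun i _ => sum_le_sum fun k _ => hterm i k
    _ = _ := by
        simp only [sum_add_distrib, sumSqDist, sum_const, card_univ, nsmul_eq_mul, ← mul_sum]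
        ring

lemma hasDerivAt_sumSqDist {x : ℝ → ι → E} {v : ι → E} {t : ℝ}
    (hx : ∀ i, HasDerivAt (fun s => x s i) (v i) t) :
    HasDerivAt (fun s => sumSqDist (x s)) (∑ i, ∑ k, 2 * ⟪x t i - x t k, v i - v k⟫) t :=
  HasDerivAt.fun_sum fun i _ => HasDerivAt.fun_sum fun k _ => ((hx i).fun_sub (hx k)).norm_sq

lemma sum_inner_sum_smul_sub [LinearOrder ι] {c : ι → ι → ℝ} (hc : ∀ i k, c i k = c k i)
    (x v : ι → E) :
    ∑ i, ⟪v i, ∑ k, c i k • (x i - x k)⟫ = ∑ p ∈ univ.filter (fun p : ι × ι => p.1 < p.2),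
      c p.1 p.2 * ⟪x p.1 - x p.2, v p.1 - v p.2⟫ := by
  have hpairs := two_mul_sum_filter_lt_eq_sum_sum (f := fun i k => c i k * ⟪x i - x k, v i - v k⟫)
    (fun i k => by rw [hc, ← neg_sub (x k), ← neg_sub (v k), inner_neg_neg]) (by simp)
  have hswap : ∑ i, ∑ k, c i k * ⟪x i - x k, v k⟫ = -∑ i, ∑ k, c i k * ⟪x i - x k, v i⟫ := by
    rw [sum_comm, ← sum_neg_distrib]
    refine sum_congr rfl fun i _ => ?_
    rw [← sum_neg_distrib]
    refine sum_congr rfl fun k _ => ?_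
    rw [hc, ← neg_sub (x i), inner_neg_left, mul_neg]
  have hfull : ∑ i, ∑ k, c i k * ⟪x i - x k, v i - v k⟫ =
      2 * ∑ i, ∑ k, c i k * ⟪x i - x k, v i⟫ := by
    simp only [inner_sub_right, mul_sub, sum_sub_distrib, hswap]
    ring
  have hlhs : ∑ i, ⟪v i, ∑ k, c i k • (x i - x k)⟫ = ∑ i, ∑ k, c i k * ⟪x i - x k, v i⟫ :=
    sum_congr rfl fun i _ => by
      rw [inner_sum]
      exact sum_congr rfl fun k _ => by rw [real_inner_smul_right, real_inner_comm]
  linarith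

end Configurations

noncomputable def velocity {ι E : Type*} [NormedAddCommGroup E] [NormedSpace ℝ E]
    (X : ℝ → ι → E) (t : ℝ) (i : ι) : E :=
  deriv (fun s => X s i) t

noncomputable def energy (m : ℕ) (h : Matrix (Fin m) (Fin m) ℝ)
    (X : ℝ → Fin m → EuclideanSpace ℝ (Fin m)) (t : ℝ) : ℝ :=
  kineticEnergy m (velocity X t) + potentialEnergy m h (X t)

section Energy

variable {m : ℕ} {h : Matrix (Fin m) (Fin m) ℝ}

lemma kineticEnergy_nonneg (Y : Fin m → EuclideanSpace ℝ (Fin m)) : 0 ≤ kineticEnergy m Y := by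
  unfold kineticEnergy
  positivity

lemma force_eq_sum (x : Fin m → EuclideanSpace ℝ (Fin m)) (i : Fin m) :
    force m h x i = ∑ k, (1 / ‖x i - x k‖ ^ 2 - h i k) • (x i - x k) :=
  sum_filter_of_ne fun k _ hk hki => hk (by rw [hki, sub_self, smul_zero])

lemma sum_inner_force (hsymm : ∀ i k, h i k = h k i) (x v : Fin m → EuclideanSpace ℝ (Fin m)) :
    ∑ i, ⟪v i, force m h x i⟫ = ∑ p ∈ univ.filter (fun p : Fin m × Fin m => p.1 < p.2),
      (1 / ‖x p.1 - x p.2‖ ^ 2 - h p.1 p.2) * ⟪x p.1 - x p.2, v p.1 - v p.2⟫ := by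
  simp only [force_eq_sum]
  exact sum_inner_sum_smul_sub (fun i k => by rw [norm_sub_rev, hsymm]) x v

lemma potentialEnergy_eq_sum (hsymm : ∀ i k, h i k = h k i)
    (x : Fin m → EuclideanSpace ℝ (Fin m)) :
    potentialEnergy m h x =
      1 / 4 * ∑ i, ∑ k, (h i k * ‖x i - x k‖ ^ 2 - Real.log (‖x i - x k‖ ^ 2)) := by
  -- the diagonal terms vanish because `Real.log 0 = 0`
  rw [potentialEnergy, ← two_mul_sum_filter_lt_eq_sum_sum
    (fun i k => by rw [norm_sub_rev, hsymm]) (by simp)]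
  simp only [← neg_sub (Real.log _), sum_neg_distrib]
  ring

lemma neg_potentialEnergy_le (hsymm : ∀ i k, h i k = h k i) (hnonneg : ∀ i k, 0 ≤ h i k)
    (x : Fin m → EuclideanSpace ℝ (Fin m)) : -potentialEnergy m h x ≤ sumSqDist x / 4 := by
  have hterm : ∀ i k, Real.log (‖x i - x k‖ ^ 2) - h i k * ‖x i - x k‖ ^ 2 ≤ ‖x i - x k‖ ^ 2 :=
    fun i k => by
      linarith [Real.log_le_self (sq_nonneg ‖x i - x k‖),
        mul_nonneg (hnonneg i k) (sq_nonneg ‖x i - x k‖)]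
  have hsum := sum_le_sum fun i (_ : i ∈ univ) => sum_le_sum fun k (_ : k ∈ univ) => hterm i k
  simp only [sum_sub_distrib] at hsum
  rw [potentialEnergy_eq_sum hsymm, sumSqDist]
  simp only [sum_sub_distrib]
  linarith

lemma exp_neg_le_sq_norm_sub (hsymm : ∀ i k, h i k = h k i) (hnonneg : ∀ i k, 0 ≤ h i k)
    {x : Fin m → EuclideanSpace ℝ (Fin m)} {M : ℝ} (hM : ∀ i k, ‖x i - x k‖ ^ 2 ≤ M)
    {r s : Fin m} (hrs : x r ≠ x s) :
    Real.exp (-(4 * potentialEnergy m h x + m ^ 2 * M)) ≤ ‖x r - x s‖ ^ 2 := by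
  have hP := potentialEnergy_eq_sum hsymm x
  set a : Fin m → Fin m → ℝ := fun i k => h i k * ‖x i - x k‖ ^ 2 - Real.log (‖x i - x k‖ ^ 2)
  have ha : ∀ i k, -M ≤ a i k := fun i k => by
    linarith [Real.log_le_self (sq_nonneg ‖x i - x k‖), hM i k,
      mul_nonneg (hnonneg i k) (sq_nonneg ‖x i - x k‖)]
  have hsingle : a r s + M ≤ ∑ p : Fin m × Fin m, (a p.1 p.2 + M) :=
    single_le_sum (f := fun p : Fin m × Fin m => a p.1 p.2 + M)
      (fun p _ => by linarith [ha p.1 p.2]) (mem_univ (r, s))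
  rw [sum_add_distrib, Fintype.sum_prod_type', sum_const, card_univ, Fintype.card_prod,
    Fintype.card_fin, nsmul_eq_mul, Nat.cast_mul, ← sq] at hsingle
  have hpos : 0 < ‖x r - x s‖ ^ 2 := by
    have := sub_ne_zero.2 hrs
    positivity
  have hlog : -Real.log (‖x r - x s‖ ^ 2) ≤ a r s := by
    linarith [mul_nonneg (hnonneg r s) hpos.le]
  have hM₀ : 0 ≤ M := by simpa using hM r r
  rw [← Real.exp_log hpos, Real.exp_le_exp]
  linarith

namespace IsSolution

variable {S : Set ℝ} {X : ℝ → Fin m → EuclideanSpace ℝ (Fin m)} {t : ℝ}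

lemma hasDerivAt (hX : IsSolution m h S X) (ht : t ∈ S) (i : Fin m) :
    HasDerivAt (fun s => X s i) (velocity X t i) t :=
  (hX.2.1 i t ht).hasDerivAt

lemma hasDerivAt_velocity (hX : IsSolution m h S X) (ht : t ∈ S) (i : Fin m) :
    HasDerivAt (fun s => velocity X s i) (force m h (X t) i) t :=
  hX.2.2 i t ht

lemma hasDerivAt_kineticEnergy (hX : IsSolution m h S X) (ht : t ∈ S) :
    HasDerivAt (fun s => kineticEnergy m (velocity X s))
      (∑ i, ⟪velocity X t i, force m h (X t) i⟫) t :=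
  ((HasDerivAt.fun_sum fun i _ => (hX.hasDerivAt_velocity ht i).norm_sq).const_mul
    (1 / 2)).congr_deriv (by rw [mul_sum]; exact sum_congr rfl fun i _ => by ring)

lemma hasDerivAt_potentialEnergy (hX : IsSolution m h S X) (ht : t ∈ S) :
    HasDerivAt (fun s => potentialEnergy m h (X s))
      (-∑ p ∈ univ.filter (fun p : Fin m × Fin m => p.1 < p.2),
        (1 / ‖X t p.1 - X t p.2‖ ^ 2 - h p.1 p.2) *
          ⟪X t p.1 - X t p.2, velocity X t p.1 - velocity X t p.2⟫) t := by
  have hterm : ∀ p ∈ univ.filter (fun p : Fin m × Fin m => p.1 < p.2),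
      HasDerivAt
        (fun s => Real.log (‖X s p.1 - X s p.2‖ ^ 2) - h p.1 p.2 * ‖X s p.1 - X s p.2‖ ^ 2)
        (2 * ((1 / ‖X t p.1 - X t p.2‖ ^ 2 - h p.1 p.2) *
          ⟪X t p.1 - X t p.2, velocity X t p.1 - velocity X t p.2⟫)) t := by
    intro p hp
    have hd := ((hX.hasDerivAt ht p.1).fun_sub (hX.hasDerivAt ht p.2)).norm_sq
    have hg : ‖X t p.1 - X t p.2‖ ^ 2 ≠ 0 :=
      pow_ne_zero 2 (norm_ne_zero_iff.2 (sub_ne_zero.2 (hX.1 t ht _ _ (mem_filter.1 hp).2.ne)))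
    exact ((hd.log hg).sub (hd.const_mul (h p.1 p.2))).congr_deriv (by ring)
  exact ((HasDerivAt.fun_sum hterm).const_mul (-(1 / 2))).congr_deriv
    (by rw [mul_sum, ← sum_neg_distrib]; exact sum_congr rfl fun p _ => by ring)

lemma hasDerivAt_energy (hsymm : ∀ i k, h i k = h k i) (hX : IsSolution m h S X)
    (ht : t ∈ S) : HasDerivAt (energy m h X) 0 t := by
  have := (hX.hasDerivAt_kineticEnergy ht).add (hX.hasDerivAt_potentialEnergy ht)
  rwa [sum_inner_force hsymm, add_neg_cancel] at this

lemma energy_eq {a b : ℝ} (hsymm : ∀ i k, h i k = h k i) (hX : IsSolution m h (Set.Ico a b) X)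
    (ht : t ∈ Set.Ico a b) : energy m h X t = energy m h X a :=
  constant_of_has_deriv_right_zero
    (fun _ hy => (hX.hasDerivAt_energy hsymm
      (Set.Icc_subset_Ico_right ht.2 hy)).continuousAt.continuousWithinAt)
    (fun _ hy => (hX.hasDerivAt_energy hsymm
      (Set.Ico_subset_Ico_right ht.2.le hy)).hasDerivWithinAt)
    t ⟨ht.1, le_rfl⟩

lemma sum_sum_inner_velocity_le {a b : ℝ} (hsymm : ∀ i k, h i k = h k i)
    (hnonneg : ∀ i k, 0 ≤ h i k) (hX : IsSolution m h (Set.Ico a b) X) (ht : t ∈ Set.Ico a b) :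
    ∑ i, ∑ k, 2 * ⟪X t i - X t k, velocity X t i - velocity X t k⟫ ≤
      (2 * m + 1) * sumSqDist (X t) + 8 * m * energy m h X a := by
  have hkinetic : kineticEnergy m (velocity X t) ≤ energy m h X a + sumSqDist (X t) / 4 := by
    rw [← hX.energy_eq hsymm ht, energy]
    linarith [neg_potentialEnergy_le hsymm hnonneg (X t)]
  have hm : (0 : ℝ) ≤ 8 * m := by positivity
  calc _ ≤ sumSqDist (X t) + 4 * m * ∑ i, ‖velocity X t i‖ ^ 2 := by
        simpa using sum_sum_two_mul_inner_sub_le (X t) (velocity X t)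
    _ = sumSqDist (X t) + 8 * m * kineticEnergy m (velocity X t) := by
        rw [kineticEnergy]
        ring
    _ ≤ _ := by nlinarith [mul_le_mul_of_nonneg_left hkinetic hm]

end IsSolution

end Energy

theorem solution_separated_on_Ico_general (m : ℕ) (h : Matrix (Fin m) (Fin m) ℝ)
    (hsymm : ∀ i k, h i k = h k i)
    (h01 : ∀ i k, h i k = 0 ∨ h i k = 1)
    (t₀ β : ℝ) (X : ℝ → Fin m → EuclideanSpace ℝ (Fin m))
    (hX : IsSolution m h (Set.Ico t₀ β) X) :
    ∃ L > (0 : ℝ), ∀ t ∈ Set.Ico t₀ β, ∀ r s : Fin m, r ≠ s → L ≤ ‖X t r - X t s‖ := by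
  have hnonneg : ∀ i k, 0 ≤ h i k := fun i k => by rcases h01 i k with hik | hik <;> simp [hik]
  obtain ⟨M, hM⟩ := bddAbove_image_Ico_of_hasDerivAt_le (by positivity : (0 : ℝ) ≤ 2 * m + 1)
    (fun t ht => hasDerivAt_sumSqDist (hX.hasDerivAt ht))
    (fun t ht => hX.sum_sum_inner_velocity_le hsymm hnonneg ht)
  refine ⟨√(Real.exp (-(4 * energy m h X t₀ + m ^ 2 * M))), by positivity,
    fun t ht r s hrs => ?_⟩
  have hpotential : potentialEnergy m h (X t) ≤ energy m h X t₀ := by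
    rw [← hX.energy_eq hsymm ht, energy]
    linarith [kineticEnergy_nonneg (velocity X t)]
  have hsep := exp_neg_le_sq_norm_sub hsymm hnonneg
    (fun i k => (sq_norm_sub_le_sumSqDist (X t) i k).trans (hM ⟨t, ht, rfl⟩)) (hX.1 t ht r s hrs)
  calc √(Real.exp (-(4 * energy m h X t₀ + m ^ 2 * M)))
      ≤ √(‖X t r - X t s‖ ^ 2) :=
        Real.sqrt_le_sqrt (le_trans (Real.exp_le_exp.2 (by linarith)) hsep)
    _ = ‖X t r - X t s‖ := Real.sqrt_sq (norm_nonneg _)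

/-- Along a solution of the system on `[t₀, β)` with `β < +∞`, the points stay uniformly
separated: there is `L > 0` with `‖x_r(t) − x_s(t)‖ ≥ L` for all `t ∈ [t₀, β)` and `r ≠ s`. -/
theorem solution_separated_on_Ico (m : ℕ) (hm : 2 ≤ m) (h : Matrix (Fin m) (Fin m) ℝ)
    (hsymm : ∀ i k, h i k = h k i) (hdiag : ∀ i, h i i = 0)
    (h01 : ∀ i k, h i k = 0 ∨ h i k = 1)
    (t₀ β : ℝ) (X : ℝ → Fin m → EuclideanSpace ℝ (Fin m))
    (hX : IsSolution m h (Set.Ico t₀ β) X) :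
    ∃ L > (0 : ℝ), ∀ t ∈ Set.Ico t₀ β, ∀ r s : Fin m, r ≠ s → L ≤ ‖X t r - X t s‖ :=
  solution_separated_on_Ico_general m h hsymm h01 t₀ β X hX
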